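/- Let G be a simple connected C4-free positively LLY-curved graph with minimum degree 2 and maximum degree 3. Then G contains a triangle. -/
import Mathlib


open Finset

noncomputable section
open scoped Classical

variable {V : Type*}

/-- Degree of a vertex. -/
def deg [Fintype V] (G : SimpleGraph V) (x : V) : ℕ :=
  (Finset.univ.filter fun z => G.Adj x z).card

/-- Maximum degree. -/
def maxDeg [Fintype V] (G : SimpleGraph V) : ℕ :=
  Finset.univ.sup (deg G)

/-- Normalized graph Laplacian. -/
def lap [Fintype V] (G : SimpleGraph V) (f : V → ℝ) (x : V) : ℝ :=
  (deg G x : ℝ)⁻¹ * ∑ z ∈ Finset.univ.filter (fun z => G.Adj x z), (f z - f x)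

/-- `f` is 1-Lipschitz with respect to the graph distance. -/
def Lip1 (G : SimpleGraph V) (f : V → ℝ) : Prop :=
  ∀ u v : V, |f u - f v| ≤ (G.dist u v : ℝ)

/-- Lin-Lu-Yau curvature via the Münch–Wojciechowski limit-free formulation. -/
def kappa [Fintype V] (G : SimpleGraph V) (x y : V) : ℝ :=
  sInf {r : ℝ | ∃ f : V → ℝ, Lip1 G f ∧ f y - f x = 1 ∧ r = lap G f x - lap G f y}

/-- Every edge has positive Lin-Lu-Yau curvature. -/
def PosLLY [Fintype V] (G : SimpleGraph V) : Prop :=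
  ∀ x y : V, G.Adj x y → 0 < kappa G x y

/-- `G` contains no 4-cycle (as a subgraph). -/
def C4Free (G : SimpleGraph V) : Prop :=
  ∀ a b c d : V, a ≠ b → b ≠ c → c ≠ d → d ≠ a → a ≠ c → b ≠ d →
    ¬(G.Adj a b ∧ G.Adj b c ∧ G.Adj c d ∧ G.Adj d a)

/-- Cycle graph on `ZMod n`. -/
def cyc (n : ℕ) : SimpleGraph (ZMod n) :=
  SimpleGraph.fromRel (fun i j => j = i + 1)

/-- Friendship graph `F_k`: `k` triangles sharing the common vertex `0`. -/
def friendship (k : ℕ) : SimpleGraph (Fin (2 * k + 1)) :=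
  SimpleGraph.fromRel (fun i j => i.val = 0 ∨ j.val = 0 ∨ (i.val + 1) / 2 = (j.val + 1) / 2)

/-- The graph `T`: a triangle `0,1,2` and a vertex `3` joined to each triangle
vertex by a path of length two (through `4,5,6` respectively). -/
def graphT : SimpleGraph (Fin 7) :=
  SimpleGraph.fromRel (fun i j => (i, j) ∈
    ([(0,1),(1,2),(0,2),(0,4),(4,3),(1,5),(5,3),(2,6),(6,3)] : List (Fin 7 × Fin 7)))



lemma lip1_max {G : SimpleGraph V} {f g : V → ℝ} (hf : Lip1 G f) (hg : Lip1 G g) :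
    Lip1 G (fun z => max (f z) (g z)) := by
  intro u v
  exact (abs_max_sub_max_le_max (f u) (g u) (f v) (g v)).trans (max_le (hf u v) (hg u v))

lemma lip1_dist {G : SimpleGraph V} (hconn : G.Connected) (p : V) (c : ℝ) :
    Lip1 G (fun z => c - (G.dist p z : ℝ)) := by
  intro u v
  have h1 : G.dist p u ≤ G.dist p v + G.dist v u := hconn.dist_triangle
  have h2 : G.dist p v ≤ G.dist p u + G.dist u v := hconn.dist_triangle
  have hc : G.dist v u = G.dist u v := SimpleGraph.dist_comm
  rw [hc] at h1
  have h1' : (G.dist p u : ℝ) ≤ (G.dist p v : ℝ) + (G.dist u v : ℝ) := by exact_mod_cast h1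
  have h2' : (G.dist p v : ℝ) ≤ (G.dist p u : ℝ) + (G.dist u v : ℝ) := by exact_mod_cast h2
  rw [abs_sub_le_iff]
  constructor <;> · dsimp only; linarith

lemma real_dist_adj {G : SimpleGraph V} {u v : V} (h : G.Adj u v) : (G.dist u v : ℝ) = 1 := by
  rw [SimpleGraph.dist_eq_one_iff_adj.mpr h]; norm_num

lemma real_dist_self {G : SimpleGraph V} (u : V) : (G.dist u u : ℝ) = 0 := by
  simp

lemma real_one_le_dist {G : SimpleGraph V} (hconn : G.Connected) {u v : V} (hne : u ≠ v) :
    (1 : ℝ) ≤ (G.dist u v : ℝ) := by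
  exact_mod_cast hconn.pos_dist_of_ne hne

lemma two_le_dist {G : SimpleGraph V} (hconn : G.Connected) {u v : V} (hne : u ≠ v)
    (hna : ¬ G.Adj u v) : 2 ≤ G.dist u v := by
  have h0 : G.dist u v ≠ 0 := (hconn.pos_dist_of_ne hne).ne'
  have h1 : G.dist u v ≠ 1 := fun h => hna (SimpleGraph.dist_eq_one_iff_adj.mp h)
  omega

lemma real_two_le_dist {G : SimpleGraph V} (hconn : G.Connected) {u v : V} (hne : u ≠ v)
    (hna : ¬ G.Adj u v) : (2 : ℝ) ≤ (G.dist u v : ℝ) := by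
  exact_mod_cast two_le_dist hconn hne hna

lemma real_three_le_dist {G : SimpleGraph V} {u v : V} (h : ¬ G.dist u v ≤ 2) :
    (3 : ℝ) ≤ (G.dist u v : ℝ) := by
  have : 3 ≤ G.dist u v := by omega
  exact_mod_cast this

lemma exists_common {G : SimpleGraph V} (hconn : G.Connected) {u v : V} (h : G.dist u v = 2) :
    ∃ w, G.Adj u w ∧ G.Adj w v := by
  obtain ⟨p, hp⟩ := (hconn u v).exists_walk_length_eq_dist
  rw [h] at hp
  cases p with
  | nil => simp at hp
  | cons h1 q =>
    cases q with
    | nil => simp at hp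
    | cons h2 r =>
      cases r with
      | nil => exact ⟨_, h1, h2⟩
      | cons h3 s => simp [SimpleGraph.Walk.length_cons] at hp

lemma nbhd_three [Fintype V] {G : SimpleGraph V} {x y : V} (hdeg : deg G x = 3)
    (hy : G.Adj x y) :
    ∃ a b : V, a ≠ b ∧ G.Adj x a ∧ G.Adj x b ∧ a ≠ y ∧ b ≠ y ∧
      Finset.univ.filter (fun z => G.Adj x z) = insert y {a, b} := by
  set N := Finset.univ.filter (fun z => G.Adj x z) with hNdef
  have hyN : y ∈ N := by simp [hNdef, hy]
  have hNc : N.card = 3 := hdeg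
  have hcard : (N.erase y).card = 2 := by
    rw [Finset.card_erase_of_mem hyN, hNc]
  obtain ⟨a, b, hab, h2⟩ := Finset.card_eq_two.mp hcard
  have haN : a ∈ N.erase y := by rw [h2]; simp
  have hbN : b ∈ N.erase y := by rw [h2]; simp
  refine ⟨a, b, hab, ?_, ?_, ?_, ?_, ?_⟩
  · exact (Finset.mem_filter.mp (Finset.mem_of_mem_erase haN)).2
  · exact (Finset.mem_filter.mp (Finset.mem_of_mem_erase hbN)).2
  · exact Finset.ne_of_mem_erase haN
  · exact Finset.ne_of_mem_erase hbN
  · rw [← h2, Finset.insert_erase hyN]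

lemma nbhd_two [Fintype V] {G : SimpleGraph V} {y x : V} (hdeg : deg G y = 2)
    (hx : G.Adj y x) :
    ∃ b : V, G.Adj y b ∧ b ≠ x ∧
      Finset.univ.filter (fun z => G.Adj y z) = insert x {b} := by
  set N := Finset.univ.filter (fun z => G.Adj y z) with hNdef
  have hxN : x ∈ N := by simp [hNdef, hx]
  have hNc : N.card = 2 := hdeg
  have hcard : (N.erase x).card = 1 := by
    rw [Finset.card_erase_of_mem hxN, hNc]
  obtain ⟨b, h2⟩ := Finset.card_eq_one.mp hcard
  have hbN : b ∈ N.erase x := by rw [h2]; simp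
  refine ⟨b, ?_, ?_, ?_⟩
  · exact (Finset.mem_filter.mp (Finset.mem_of_mem_erase hbN)).2
  · exact Finset.ne_of_mem_erase hbN
  · rw [← h2, Finset.insert_erase hxN]

lemma lap_eq_three [Fintype V] {G : SimpleGraph V} (f : V → ℝ) {x y a b : V}
    (hN : Finset.univ.filter (fun z => G.Adj x z) = insert y {a, b})
    (hya : a ≠ y) (hyb : b ≠ y) (hab : a ≠ b) (hdx : deg G x = 3) :
    lap G f x = (3:ℝ)⁻¹ * (f y + f a + f b - 3 * f x) := by
  unfold lap
  rw [hdx, hN, Finset.sum_insert (by simp [hya.symm, hyb.symm]), Finset.sum_pair hab]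
  push_cast
  ring

lemma lap_eq_two [Fintype V] {G : SimpleGraph V} (f : V → ℝ) {y x b : V}
    (hN : Finset.univ.filter (fun z => G.Adj y z) = insert x {b})
    (hbx : b ≠ x) (hdy : deg G y = 2) :
    lap G f y = (2:ℝ)⁻¹ * (f x + f b - 2 * f y) := by
  unfold lap
  rw [hdy, hN, Finset.sum_insert (by simp [hbx.symm]), Finset.sum_singleton]
  push_cast
  ring

lemma abs_lap_le_one [Fintype V] {G : SimpleGraph V} {g : V → ℝ} (hg : Lip1 G g) (v : V)
    (hd : 0 < deg G v) : |lap G g v| ≤ 1 := by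
  have hdpos : (0:ℝ) < (deg G v : ℝ) := by exact_mod_cast hd
  have hbound : |∑ z ∈ Finset.univ.filter (fun z => G.Adj v z), (g z - g v)| ≤ (deg G v : ℝ) := by
    calc |∑ z ∈ Finset.univ.filter (fun z => G.Adj v z), (g z - g v)|
        ≤ ∑ z ∈ Finset.univ.filter (fun z => G.Adj v z), |g z - g v| :=
          Finset.abs_sum_le_sum_abs _ _
      _ ≤ ∑ _z ∈ Finset.univ.filter (fun z => G.Adj v z), (1:ℝ) := by
          refine Finset.sum_le_sum fun z hz => ?_
          have hadj : G.Adj v z := (Finset.mem_filter.mp hz).2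
          have := hg z v
          rwa [real_dist_adj hadj.symm] at this
      _ = (deg G v : ℝ) := by
          rw [Finset.sum_const, nsmul_eq_mul, mul_one]; rfl
  unfold lap
  rw [abs_mul, abs_inv, Nat.abs_cast]
  calc (deg G v : ℝ)⁻¹ * |∑ z ∈ Finset.univ.filter (fun z => G.Adj v z), (g z - g v)|
      ≤ (deg G v : ℝ)⁻¹ * (deg G v : ℝ) :=
        mul_le_mul_of_nonneg_left hbound (inv_nonneg.mpr hdpos.le)
    _ = 1 := inv_mul_cancel₀ hdpos.ne'

lemma kappa_nonpos [Fintype V] {G : SimpleGraph V} {x y : V}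
    (hdx : 0 < deg G x) (hdy : 0 < deg G y)
    {f : V → ℝ} (hf : Lip1 G f) (hfy : f y - f x = 1)
    (hle : lap G f x - lap G f y ≤ 0) : kappa G x y ≤ 0 := by
  have hbdd : BddBelow {r : ℝ | ∃ f : V → ℝ,
      Lip1 G f ∧ f y - f x = 1 ∧ r = lap G f x - lap G f y} := by
    refine ⟨-2, fun r hr => ?_⟩
    obtain ⟨g, hg, -, rfl⟩ := hr
    have h1 := abs_lap_le_one hg x hdx
    have h2 := abs_lap_le_one hg y hdy
    rw [abs_le] at h1 h2
    linarith [h1.1, h2.2]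
  exact le_trans (csInf_le hbdd ⟨f, hf, hfy, rfl⟩) hle

lemma max4_le {t1 t2 t3 t4 c : ℝ} (h1 : t1 ≤ c) (h2 : t2 ≤ c) (h3 : t3 ≤ c)
    (h4 : t4 ≤ c) : max (max t1 t2) (max t3 t4) ≤ c :=
  max_le (max_le h1 h2) (max_le h3 h4)

lemma le_max4_1 {t1 t2 t3 t4 : ℝ} : t1 ≤ max (max t1 t2) (max t3 t4) :=
  le_max_of_le_left (le_max_left _ _)

lemma le_max4_2 {t1 t2 t3 t4 : ℝ} : t2 ≤ max (max t1 t2) (max t3 t4) :=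
  le_max_of_le_left (le_max_right _ _)

lemma le_max4_3 {t1 t2 t3 t4 : ℝ} : t3 ≤ max (max t1 t2) (max t3 t4) :=
  le_max_of_le_right (le_max_left _ _)

lemma le_max4_4 {t1 t2 t3 t4 : ℝ} : t4 ≤ max (max t1 t2) (max t3 t4) :=
  le_max_of_le_right (le_max_right _ _)

/-- Case A: an edge between two degree-3 vertices has nonpositive curvature
(in a triangle-free, C4-free graph). -/
lemma caseA [Fintype V] {G : SimpleGraph V} (hconn : G.Connected)
    (h4 : C4Free G) (hpos : PosLLY G)
    (hT : ∀ a b c : V, G.Adj a b → G.Adj b c → G.Adj c a → False)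
    {x y : V} (hxy : G.Adj x y) (hdx : deg G x = 3) (hdy : deg G y = 3) : False := by
  obtain ⟨a1, a2, ha12, hxa1, hxa2, ha1y, ha2y, hNx⟩ := nbhd_three hdx hxy
  obtain ⟨b1, b2, hb12, hyb1, hyb2, hb1x, hb2x, hNy⟩ := nbhd_three hdy hxy.symm
  -- non-adjacency facts
  have hnb1x : ¬ G.Adj b1 x := fun h => hT x y b1 hxy hyb1 h
  have hnb2x : ¬ G.Adj b2 x := fun h => hT x y b2 hxy hyb2 h
  have hnya : ∀ a, G.Adj x a → a ≠ y → ¬ G.Adj y a :=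
    fun a ha hay h => hT a x y ha.symm hxy h
  have hba : ∀ b a, G.Adj y b → b ≠ x → G.Adj x a → a ≠ y → (2:ℝ) ≤ (G.dist b a : ℝ) := by
    intro b a hybb hbxx hxaa hay
    have hne : b ≠ a := fun h => hnya a hxaa hay (h ▸ hybb)
    have hnadj : ¬ G.Adj b a := by
      intro h
      exact h4 x y b a hxy.ne hybb.ne hne hxaa.ne' (Ne.symm hbxx) (Ne.symm hay)
        ⟨hxy, hybb, h, hxaa.symm⟩
    exact real_two_le_dist hconn hne hnadj
  set F : V → ℝ := fun z => max (max ((0:ℝ) - (G.dist x z : ℝ)) ((1:ℝ) - (G.dist y z : ℝ)))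
      (max ((2:ℝ) - (G.dist b1 z : ℝ)) ((2:ℝ) - (G.dist b2 z : ℝ))) with hF
  have hLip : Lip1 G F := by
    rw [hF]
    exact lip1_max (lip1_max (lip1_dist hconn x 0) (lip1_dist hconn y 1))
      (lip1_max (lip1_dist hconn b1 2) (lip1_dist hconn b2 2))
  have hFx : F x = 0 := by
    have e1 : (G.dist x x : ℝ) = 0 := real_dist_self x
    have e2 : (G.dist y x : ℝ) = 1 := real_dist_adj hxy.symm
    have e3 : (2:ℝ) ≤ (G.dist b1 x : ℝ) := real_two_le_dist hconn hb1x hnb1x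
    have e4 : (2:ℝ) ≤ (G.dist b2 x : ℝ) := real_two_le_dist hconn hb2x hnb2x
    simp only [hF]
    apply le_antisymm
    · exact max4_le (by linarith) (by linarith) (by linarith) (by linarith)
    · calc (0:ℝ) = 0 - (G.dist x x : ℝ) := by rw [e1]; ring
        _ ≤ _ := le_max4_1
  have hFy : F y = 1 := by
    have e1 : (0:ℝ) ≤ (G.dist x y : ℝ) := Nat.cast_nonneg _
    have e2 : (G.dist y y : ℝ) = 0 := real_dist_self y
    have e3 : (1:ℝ) ≤ (G.dist b1 y : ℝ) := real_one_le_dist hconn hyb1.ne'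
    have e4 : (1:ℝ) ≤ (G.dist b2 y : ℝ) := real_one_le_dist hconn hyb2.ne'
    simp only [hF]
    apply le_antisymm
    · exact max4_le (by linarith) (by linarith) (by linarith) (by linarith)
    · calc (1:ℝ) = 1 - (G.dist y y : ℝ) := by rw [e2]; ring
        _ ≤ _ := le_max4_2
  have hFb1 : F b1 = 2 := by
    have e1 : (0:ℝ) ≤ (G.dist x b1 : ℝ) := Nat.cast_nonneg _
    have e2 : (0:ℝ) ≤ (G.dist y b1 : ℝ) := Nat.cast_nonneg _
    have e3 : (G.dist b1 b1 : ℝ) = 0 := real_dist_self b1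
    have e4 : (0:ℝ) ≤ (G.dist b2 b1 : ℝ) := Nat.cast_nonneg _
    simp only [hF]
    apply le_antisymm
    · exact max4_le (by linarith) (by linarith) (by linarith) (by linarith)
    · calc (2:ℝ) = 2 - (G.dist b1 b1 : ℝ) := by rw [e3]; ring
        _ ≤ _ := le_max4_3
  have hFb2 : F b2 = 2 := by
    have e1 : (0:ℝ) ≤ (G.dist x b2 : ℝ) := Nat.cast_nonneg _
    have e2 : (0:ℝ) ≤ (G.dist y b2 : ℝ) := Nat.cast_nonneg _
    have e3 : (G.dist b2 b2 : ℝ) = 0 := real_dist_self b2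
    have e4 : (0:ℝ) ≤ (G.dist b1 b2 : ℝ) := Nat.cast_nonneg _
    simp only [hF]
    apply le_antisymm
    · exact max4_le (by linarith) (by linarith) (by linarith) (by linarith)
    · calc (2:ℝ) = 2 - (G.dist b2 b2 : ℝ) := by rw [e3]; ring
        _ ≤ _ := le_max4_4
  have hFa : ∀ a, G.Adj x a → a ≠ y → F a ≤ 0 := by
    intro a hxaa hay
    have e1 : (0:ℝ) ≤ (G.dist x a : ℝ) := Nat.cast_nonneg _
    have e2 : (1:ℝ) ≤ (G.dist y a : ℝ) := real_one_le_dist hconn (Ne.symm hay)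
    have e3 : (2:ℝ) ≤ (G.dist b1 a : ℝ) := hba b1 a hyb1 hb1x hxaa hay
    have e4 : (2:ℝ) ≤ (G.dist b2 a : ℝ) := hba b2 a hyb2 hb2x hxaa hay
    simp only [hF]
    exact max4_le (by linarith) (by linarith) (by linarith) (by linarith)
  have hFa1 : F a1 ≤ 0 := hFa a1 hxa1 ha1y
  have hFa2 : F a2 ≤ 0 := hFa a2 hxa2 ha2y
  have hle : lap G F x - lap G F y ≤ 0 := by
    rw [lap_eq_three F hNx ha1y ha2y ha12 hdx, lap_eq_three F hNy hb1x hb2x hb12 hdy,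
      hFx, hFy, hFb1, hFb2]
    nlinarith [hFa1, hFa2]
  have hk : kappa G x y ≤ 0 :=
    kappa_nonpos (by omega) (by omega) hLip (by rw [hFy, hFx]; norm_num) hle
  exact absurd (hpos x y hxy) (not_lt.mpr hk)

/-- Case B: an edge from a degree-3 vertex `x` to a degree-2 vertex `y`, such that
some other neighbor `a1` of `x` is at distance `≥ 3` from the second neighbor `b`
of `y`, has nonpositive curvature. -/
lemma caseB [Fintype V] {G : SimpleGraph V} (hconn : G.Connected)
    (h4 : C4Free G) (hpos : PosLLY G)
    (hT : ∀ a b c : V, G.Adj a b → G.Adj b c → G.Adj c a → False)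
    {x y a1 b : V} (hxy : G.Adj x y) (hdx : deg G x = 3) (hdy : deg G y = 2)
    (ha1 : G.Adj x a1) (ha1y : a1 ≠ y) (hb : G.Adj y b) (hbx : b ≠ x)
    (hfar : ¬ G.dist a1 b ≤ 2) : False := by
  obtain ⟨c, d, hcd, hxc, hxd, hcy, hdyy, hNx⟩ := nbhd_three hdx hxy
  have ha1mem : a1 = c ∨ a1 = d := by
    have hm : a1 ∈ Finset.univ.filter (fun z => G.Adj x z) := by simp [ha1]
    rw [hNx] at hm
    simp only [Finset.mem_insert, Finset.mem_singleton] at hm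
    rcases hm with h | h
    · exact absurd h ha1y
    · exact h
  obtain ⟨b', hb', hb'x, hNy⟩ := nbhd_two hdy hxy.symm
  have hbb : b = b' := by
    have hm : b ∈ Finset.univ.filter (fun z => G.Adj y z) := by simp [hb]
    rw [hNy] at hm
    simp only [Finset.mem_insert, Finset.mem_singleton] at hm
    rcases hm with h | h
    · exact absurd h hbx
    · exact h
  subst hbb
  have hnbx : ¬ G.Adj b x := fun h => hT x y b hxy hb h
  set F : V → ℝ := fun z => max (max ((-1:ℝ) - (G.dist a1 z : ℝ)) ((0:ℝ) - (G.dist x z : ℝ)))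
      (max ((1:ℝ) - (G.dist y z : ℝ)) ((2:ℝ) - (G.dist b z : ℝ))) with hF
  have hLip : Lip1 G F := by
    rw [hF]
    exact lip1_max (lip1_max (lip1_dist hconn a1 (-1)) (lip1_dist hconn x 0))
      (lip1_max (lip1_dist hconn y 1) (lip1_dist hconn b 2))
  have hFx : F x = 0 := by
    have e1 : (0:ℝ) ≤ (G.dist a1 x : ℝ) := Nat.cast_nonneg _
    have e2 : (G.dist x x : ℝ) = 0 := real_dist_self x
    have e3 : (G.dist y x : ℝ) = 1 := real_dist_adj hxy.symm
    have e4 : (2:ℝ) ≤ (G.dist b x : ℝ) := real_two_le_dist hconn hbx hnbx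
    simp only [hF]
    apply le_antisymm
    · exact max4_le (by linarith) (by linarith) (by linarith) (by linarith)
    · calc (0:ℝ) = 0 - (G.dist x x : ℝ) := by rw [e2]; ring
        _ ≤ _ := le_max4_2
  have hFy : F y = 1 := by
    have e1 : (0:ℝ) ≤ (G.dist a1 y : ℝ) := Nat.cast_nonneg _
    have e2 : (0:ℝ) ≤ (G.dist x y : ℝ) := Nat.cast_nonneg _
    have e3 : (G.dist y y : ℝ) = 0 := real_dist_self y
    have e4 : (G.dist b y : ℝ) = 1 := real_dist_adj hb.symm
    simp only [hF]
    apply le_antisymm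
    · exact max4_le (by linarith) (by linarith) (by linarith) (by linarith)
    · calc (1:ℝ) = 1 - (G.dist y y : ℝ) := by rw [e3]; ring
        _ ≤ _ := le_max4_3
  have hFb : F b = 2 := by
    have e1 : (0:ℝ) ≤ (G.dist a1 b : ℝ) := Nat.cast_nonneg _
    have e2 : (0:ℝ) ≤ (G.dist x b : ℝ) := Nat.cast_nonneg _
    have e3 : (0:ℝ) ≤ (G.dist y b : ℝ) := Nat.cast_nonneg _
    have e4 : (G.dist b b : ℝ) = 0 := real_dist_self b
    simp only [hF]
    apply le_antisymm
    · exact max4_le (by linarith) (by linarith) (by linarith) (by linarith)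
    · calc (2:ℝ) = 2 - (G.dist b b : ℝ) := by rw [e4]; ring
        _ ≤ _ := le_max4_4
  have hFa1 : F a1 = -1 := by
    have e1 : (G.dist a1 a1 : ℝ) = 0 := real_dist_self a1
    have e2 : (G.dist x a1 : ℝ) = 1 := real_dist_adj ha1
    have e3 : (2:ℝ) ≤ (G.dist y a1 : ℝ) := by
      refine real_two_le_dist hconn (Ne.symm ha1y) fun h => ?_
      exact hT a1 x y ha1.symm hxy h
    have e4 : (3:ℝ) ≤ (G.dist b a1 : ℝ) := by
      apply real_three_le_dist
      have : G.dist b a1 = G.dist a1 b := SimpleGraph.dist_comm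
      omega
    simp only [hF]
    apply le_antisymm
    · exact max4_le (by linarith) (by linarith) (by linarith) (by linarith)
    · calc (-1:ℝ) = -1 - (G.dist a1 a1 : ℝ) := by rw [e1]; ring
        _ ≤ _ := le_max4_1
  have hFz : ∀ z, G.Adj x z → z ≠ y → F z ≤ 0 := by
    intro z hz hzy
    have hbz : b ≠ z := by
      intro h
      exact hT z x y hz.symm hxy (by rw [← h]; exact hb)
    have hnbz : ¬ G.Adj b z := by
      intro h
      exact h4 x z b y hz.ne (Ne.symm hbz) hb.ne' hxy.ne' (Ne.symm hbx) hzy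
        ⟨hz, h.symm, hb.symm, hxy.symm⟩
    have e1 : (0:ℝ) ≤ (G.dist a1 z : ℝ) := Nat.cast_nonneg _
    have e2 : (0:ℝ) ≤ (G.dist x z : ℝ) := Nat.cast_nonneg _
    have e3 : (1:ℝ) ≤ (G.dist y z : ℝ) := real_one_le_dist hconn (Ne.symm hzy)
    have e4 : (2:ℝ) ≤ (G.dist b z : ℝ) := real_two_le_dist hconn hbz hnbz
    simp only [hF]
    exact max4_le (by linarith) (by linarith) (by linarith) (by linarith)
  have hsum : F c + F d ≤ -1 := by
    rcases ha1mem with rfl | rfl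
    · have := hFz d hxd hdyy
      linarith [hFa1]
    · have := hFz c hxc hcy
      linarith [hFa1]
  have hle : lap G F x - lap G F y ≤ 0 := by
    rw [lap_eq_three F hNx hcy hdyy hcd hdx, lap_eq_two F hNy hb'x hdy, hFx, hFy, hFb]
    nlinarith [hsum]
  have hk : kappa G x y ≤ 0 :=
    kappa_nonpos (by omega) (by omega) hLip (by rw [hFy, hFx]; norm_num) hle
  exact absurd (hpos x y hxy) (not_lt.mpr hk)

theorem stmt12 [Fintype V] (G : SimpleGraph V) (hconn : G.Connected)
    (h4 : C4Free G) (hpos : PosLLY G)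
    (hmin : ∀ v : V, 2 ≤ deg G v) (hmax : maxDeg G = 3) :
    ∃ a b c : V, G.Adj a b ∧ G.Adj b c ∧ G.Adj c a := by
  by_contra hTri
  push_neg at hTri
  have hT : ∀ a b c : V, G.Adj a b → G.Adj b c → G.Adj c a → False := by
    intro a b c h1 h2 h3
    exact hTri a b c h1 h2 h3
  have hne : (Finset.univ : Finset V).Nonempty := by
    obtain ⟨v⟩ := hconn.nonempty
    exact ⟨v, Finset.mem_univ v⟩
  obtain ⟨x, -, hxs⟩ := Finset.exists_mem_eq_sup Finset.univ hne (deg G)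
  have hdx : deg G x = 3 := by
    have h : maxDeg G = deg G x := hxs
    rw [hmax] at h
    exact h.symm
  have hdle : ∀ v : V, deg G v ≤ 3 := by
    intro v
    have h : deg G v ≤ maxDeg G := Finset.le_sup (Finset.mem_univ v)
    omega
  have hNxcard : (Finset.univ.filter (fun z => G.Adj x z)).card = 3 := hdx
  obtain ⟨y1, y2, y3, h12, h13, h23, hNx⟩ := Finset.card_eq_three.mp hNxcard
  have hy1 : G.Adj x y1 := by
    have hm : y1 ∈ Finset.univ.filter (fun z => G.Adj x z) := by rw [hNx]; simp
    exact (Finset.mem_filter.mp hm).2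
  have hy2 : G.Adj x y2 := by
    have hm : y2 ∈ Finset.univ.filter (fun z => G.Adj x z) := by rw [hNx]; simp
    exact (Finset.mem_filter.mp hm).2
  have hy3 : G.Adj x y3 := by
    have hm : y3 ∈ Finset.univ.filter (fun z => G.Adj x z) := by rw [hNx]; simp
    exact (Finset.mem_filter.mp hm).2
  have hdeg2 : ∀ y : V, G.Adj x y → deg G y = 2 := by
    intro y hy
    by_cases hc : deg G y = 3
    · exact (caseA hconn h4 hpos hT hy hdx hc).elim
    · have := hmin y
      have := hdle y
      omega
  obtain ⟨b1, hb1, hb1x, hNy1⟩ := nbhd_two (hdeg2 y1 hy1) hy1.symm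
  obtain ⟨b2, hb2, hb2x, hNy2⟩ := nbhd_two (hdeg2 y2 hy2) hy2.symm
  obtain ⟨b3, hb3, hb3x, hNy3⟩ := nbhd_two (hdeg2 y3 hy3) hy3.symm
  have key : ∀ yi yj bi bj : V, G.Adj x yi → G.Adj x yj → yj ≠ yi →
      G.Adj yi bi → bi ≠ x → G.Adj yj bj → bj ≠ x →
      Finset.univ.filter (fun z => G.Adj yj z) = insert x {bj} →
      G.Adj bj bi := by
    intro yi yj bi bj hyi hyj hji hbi hbix hbj hbjx hNyj
    have h1 : yj ≠ bi := by
      intro h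
      have hadj : G.Adj yi yj := by rw [h]; exact hbi
      exact hT x yi yj hyi hadj hyj.symm
    have hnadj : ¬ G.Adj yj bi := by
      intro h
      exact h4 x yi bi yj hyi.ne hbi.ne (Ne.symm h1) hyj.ne' (Ne.symm hbix) (Ne.symm hji)
        ⟨hyi, hbi, h.symm, hyj.symm⟩
    have hd2 : G.dist yj bi = 2 := by
      have hlow := two_le_dist hconn h1 hnadj
      by_contra hne2
      have h3 : ¬ G.dist yj bi ≤ 2 := by omega
      exact caseB hconn h4 hpos hT hyi hdx (hdeg2 yi hyi) hyj hji hbi hbix h3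
    obtain ⟨w, hw1, hw2⟩ := exists_common hconn hd2
    have hwmem : w ∈ Finset.univ.filter (fun z => G.Adj yj z) := by simp [hw1]
    rw [hNyj] at hwmem
    simp only [Finset.mem_insert, Finset.mem_singleton] at hwmem
    rcases hwmem with h | h
    · have hwx : G.Adj x bi := h ▸ hw2
      exact (hT x yi bi hyi hbi hwx.symm).elim
    · exact h ▸ hw2
  have hb12 : G.Adj b1 b2 := key y2 y1 b2 b1 hy2 hy1 h12 hb2 hb2x hb1 hb1x hNy1
  have hb23 : G.Adj b2 b3 := key y3 y2 b3 b2 hy3 hy2 h23 hb3 hb3x hb2 hb2x hNy2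
  have hb31 : G.Adj b3 b1 := key y1 y3 b1 b3 hy1 hy3 (Ne.symm h13) hb1 hb1x hb3 hb3x hNy3
  exact hT b1 b2 b3 hb12 hb23 hb31
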